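/- arXiv:1812.04925 — 2 statements merged into one kernel-verified Lean document; each statement's English description precedes it below -/
import Mathlib

section
/- Let λ be a frequency with L := limsup_{N→∞} (log N)/λ_N < ∞. Suppose for each j ∈ ℕ the coefficients (a_n^j) belong to D∞^ext(λ) with extension f_j (and some bound M_j), and suppose f_j converges uniformly on {s : Re s > 0} to a function f. Then a_n := lim_{j→∞} a_n^j exists for every n, the series ∑_n a_n e^{−λ_n s} converges absolutely at every s with Re s > L, and its sum equals f(s) for all s with Re s > L; in particular (a_n) belongs to D∞^ext(λ) with extension f. (Equivalently: D∞^ext(λ) is a closed subspace of H∞ of the right half-plane, hence complete.) -/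
open Filter Finset Complex MeasureTheory Topology

/-- Partial sum `S_N(s) = ∑_{n=1}^N a_n e^{−λ_n s}` of a general Dirichlet series. -/
noncomputable def partialSum (lam : ℕ → ℝ) (a : ℕ → ℂ) (N : ℕ) (s : ℂ) : ℂ :=
  ∑ n ∈ Finset.Icc 1 N, a n * Complex.exp (-(lam n : ℂ) * s)

/-- A frequency: strictly increasing (indexed from 1), nonnegative, tending to infinity. -/
def IsFrequency (lam : ℕ → ℝ) : Prop :=
  (∀ n : ℕ, 1 ≤ n → lam n < lam (n + 1)) ∧ 0 ≤ lam 1 ∧ Tendsto lam atTop atTop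

/-- `(a_n)` belongs to `D∞^ext(λ)` with extension `f` and bound `M`. -/
def MemDExt (lam : ℕ → ℝ) (a : ℕ → ℂ) (f : ℂ → ℂ) (M : ℝ) : Prop :=
  (∃ σ₀ : ℝ,
    (∀ s : ℂ, σ₀ < s.re →
      ∃ L : ℂ, Tendsto (fun N => partialSum lam a N s) atTop (nhds L)) ∧
    (∀ s : ℂ, max σ₀ 0 < s.re →
      Tendsto (fun N => partialSum lam a N s) atTop (nhds (f s)))) ∧
  DifferentiableOn ℂ f {s : ℂ | 0 < s.re} ∧
  (∀ s : ℂ, 0 < s.re → ‖f s‖ ≤ M)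

/-!
Each `f_j` has bounded coefficients, by Bohr's estimate `|a_n| ≤ sup_{Re s > 0} |f(s)|`
(the coefficient is the mean of `f(s) e^{λ_n s}` along a vertical line, and Cauchy's theorem
moves that line to `Re s = 0`). As `∑ e^{-λ_n σ}` converges for `σ > L`, the series of `f_j`
then converges absolutely on `Re s > L`, and it equals `f_j` there by the identity theorem.
Applied to `f_j - f_k`, Bohr's estimate makes the coefficients uniformly Cauchy in `n`; the
limit coefficients therefore give a series that is the uniform limit of those of the `f_j` on
each line `Re s = σ > L`, i.e. it sums to `F`.
-/

open scoped Interval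

lemma norm_intervalAverage_le {E : Type*} [NormedAddCommGroup E] [NormedSpace ℝ E] {f : ℝ → E}
    {a b C : ℝ} (hab : a < b) (h : ∀ x ∈ Ι a b, ‖f x‖ ≤ C) : ‖⨍ x in a..b, f x‖ ≤ C := by
  have hba : 0 < b - a := sub_pos.2 hab
  rw [interval_average_eq, norm_smul, Real.norm_eq_abs, abs_inv, abs_of_pos hba]
  calc (b - a)⁻¹ * ‖∫ x in a..b, f x‖ ≤ (b - a)⁻¹ * (C * |b - a|) := by
        gcongr; exact intervalIntegral.norm_integral_le_of_norm_le_const h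
    _ = C := by rw [abs_of_pos hba]; field_simp

lemma norm_exp_ofReal_mul_ofReal_mul_I (θ t : ℝ) : ‖cexp (θ * t * I)‖ = 1 := by
  rw [Complex.norm_exp]; simp

lemma tendsto_intervalAverage_exp_mul_I (θ : ℝ) :
    Tendsto (fun T : ℝ => ⨍ t in -T..T, cexp (θ * t * I)) atTop
      (𝓝 (if θ = 0 then 1 else 0)) := by
  split_ifs with hθ
  · refine tendsto_const_nhds.congr' ?_
    filter_upwards [eventually_gt_atTop 0] with T hT
    have hT' : (T : ℂ) ≠ 0 := ofReal_ne_zero.2 hT.ne'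
    simp only [hθ, ofReal_zero, zero_mul, exp_zero, interval_average_eq, sub_neg_eq_add,
      intervalIntegral.integral_const, real_smul, ofReal_add, mul_one, smul_add, ofReal_inv]
    field_simp
  have hθI : (θ : ℂ) * I ≠ 0 := mul_ne_zero (by exact_mod_cast hθ) I_ne_zero
  have hint : ∀ T : ℝ, ‖∫ t in -T..T, cexp (θ * t * I)‖ ≤ 2 / |θ| := by
    intro T
    simp_rw [mul_right_comm _ _ I]
    rw [integral_exp_mul_complex hθI, norm_div, norm_mul, norm_I, mul_one, Complex.norm_real,
      Real.norm_eq_abs]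
    gcongr
    refine (norm_sub_le _ _).trans_eq ?_
    rw [mul_comm, mul_comm _ ((-T : ℝ) : ℂ), ← mul_assoc, ← mul_assoc,
      norm_exp_ofReal_mul_ofReal_mul_I, norm_exp_ofReal_mul_ofReal_mul_I]
    norm_num
  have hlim : Tendsto (fun T : ℝ => (2 * T)⁻¹ * (2 / |θ|)) atTop (𝓝 0) := by
    simpa using (tendsto_inv_atTop_zero.comp (tendsto_id.const_mul_atTop two_pos)).mul_const
      (2 / |θ|)
  refine squeeze_zero_norm' ?_ hlim
  filter_upwards [eventually_gt_atTop 0] with T hT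
  rw [interval_average_eq, norm_smul, Real.norm_eq_abs, sub_neg_eq_add, ← two_mul,
    abs_of_pos (by positivity)]
  gcongr
  exact hint T

lemma tendsto_intervalAverage_tsum_exp_mul_I {d : ℕ → ℂ} (hd : Summable fun m => ‖d m‖)
    (θ : ℕ → ℝ) :
    Tendsto (fun T : ℝ => ⨍ t in -T..T, ∑' m, d m * cexp (θ m * t * I)) atTop
      (𝓝 (∑' m, if θ m = 0 then d m else 0)) := by
  have hswap : ∀ T : ℝ, ⨍ t in -T..T, ∑' m, d m * cexp (θ m * t * I) =
      ∑' m, d m * ⨍ t in -T..T, cexp (θ m * t * I) := by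
    intro T
    have hsum := intervalIntegral.hasSum_integral_of_dominated_convergence (μ := volume)
      (a := -T) (b := T) (F := fun m t => d m * cexp (θ m * t * I)) (fun m _ => ‖d m‖)
      (fun m => (by fun_prop : Continuous fun t : ℝ => d m * cexp (θ m * t * I))
        |>.aestronglyMeasurable)
      (fun m => ae_of_all _ fun t _ => by rw [norm_mul, norm_exp_ofReal_mul_ofReal_mul_I, mul_one])
      (ae_of_all _ fun _ _ => hd) intervalIntegrable_const
      (ae_of_all _ fun t _ => (hd.of_norm_bounded fun m => by
        rw [norm_mul, norm_exp_ofReal_mul_ofReal_mul_I, mul_one]).hasSum)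
    rw [interval_average_eq, ← hsum.tsum_eq, ← Summable.tsum_const_smul _ hsum.summable]
    congr 1 with m
    rw [interval_average_eq, intervalIntegral.integral_const_mul, mul_smul_comm]
  simp_rw [hswap]
  refine tendsto_tsum_of_dominated_convergence hd (fun m => ?_) ?_
  · simpa [mul_ite] using (tendsto_intervalAverage_exp_mul_I (θ m)).const_mul (d m)
  · filter_upwards [eventually_gt_atTop 0] with T hT m
    rw [norm_mul]
    exact mul_le_of_le_one_right (norm_nonneg _) (norm_intervalAverage_le (by linarith)
      fun t _ => (norm_exp_ofReal_mul_ofReal_mul_I _ _).le)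

lemma norm_intervalAverage_vertical_sub_le {h : ℂ → ℂ} {σ₁ σ₂ C T : ℝ} (hσ : σ₁ ≤ σ₂)
    (hT : 0 < T) (hh : DifferentiableOn ℂ h (re ⁻¹' Set.Icc σ₁ σ₂))
    (hC : ∀ s : ℂ, s.re ∈ Set.Icc σ₁ σ₂ → ‖h s‖ ≤ C) :
    ‖(⨍ t in -T..T, h (σ₂ + t * I)) - ⨍ t in -T..T, h (σ₁ + t * I)‖ ≤ C * (σ₂ - σ₁) / T := by
  have hrect := integral_boundary_rect_eq_zero_of_differentiableOn h ⟨σ₁, -T⟩ ⟨σ₂, T⟩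
    (hh.mono fun s hs => by simpa [Set.uIcc_of_le hσ] using hs.1)
  have hhoriz : ∀ y : ℝ, ‖∫ x in σ₁..σ₂, h (x + y * I)‖ ≤ C * (σ₂ - σ₁) := by
    intro y
    refine (intervalIntegral.norm_integral_le_of_norm_le_const fun x hx => hC _ ?_).trans_eq
      (by rw [abs_of_nonneg (sub_nonneg.2 hσ)])
    rw [Set.uIoc_of_le hσ] at hx
    simpa using Set.Ioc_subset_Icc_self hx
  have hvert : (∫ t in -T..T, h (σ₂ + t * I)) - ∫ t in -T..T, h (σ₁ + t * I) =
      I * ((∫ x in σ₁..σ₂, h (x + (-T : ℝ) * I)) - ∫ x in σ₁..σ₂, h (x + T * I)) := by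
    simp only [smul_eq_mul] at hrect
    linear_combination (norm := ring_nf) (-I) * hrect
    rw [I_sq]
    ring_nf
  rw [interval_average_eq, interval_average_eq, ← smul_sub, hvert, norm_smul, norm_mul, norm_I,
    one_mul, Real.norm_eq_abs, sub_neg_eq_add, abs_of_pos (by positivity)]
  calc (T + T)⁻¹ * ‖(∫ x in σ₁..σ₂, h (x + (-T : ℝ) * I)) - ∫ x in σ₁..σ₂, h (x + T * I)‖
      ≤ (T + T)⁻¹ * (C * (σ₂ - σ₁) + C * (σ₂ - σ₁)) := by
        gcongr
        exact (norm_sub_le _ _).trans (add_le_add (hhoriz _) (hhoriz _))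
    _ = C * (σ₂ - σ₁) / T := by field_simp

/-- Frequencies and coefficients are indexed from `0` here: the paper's series has
`μ m = λ_{m+1}` and `c m = a_{m+1}`. -/
noncomputable def dirichletTerm (μ : ℕ → ℝ) (c : ℕ → ℂ) (s : ℂ) (m : ℕ) : ℂ :=
  c m * cexp (-(μ m : ℂ) * s)

def HasDirichletExpansion (μ : ℕ → ℝ) (c : ℕ → ℂ) (f : ℂ → ℂ) (α : ℝ) : Prop :=
  ∀ s : ℂ, α < s.re →
    Summable (fun m => ‖dirichletTerm μ c s m‖) ∧ ∑' m, dirichletTerm μ c s m = f s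

section DirichletSeries

variable {μ : ℕ → ℝ} {c : ℕ → ℂ}

lemma norm_dirichletTerm (s : ℂ) (m : ℕ) :
    ‖dirichletTerm μ c s m‖ = ‖c m‖ * Real.exp (-μ m * s.re) := by
  simp [dirichletTerm, Complex.norm_exp]

lemma tendsto_intervalAverage_dirichlet (hμ : Function.Injective μ) {σ : ℝ}
    (hc : Summable fun m => ‖c m‖ * Real.exp (-μ m * σ)) (n : ℕ) :
    Tendsto (fun T : ℝ => ⨍ t in -T..T,
      (∑' m, dirichletTerm μ c (σ + t * I) m) * cexp (μ n * (σ + t * I))) atTop (𝓝 (c n)) := by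
  set d : ℕ → ℂ := fun m => c m * cexp (((μ n - μ m) * σ : ℝ) : ℂ)
  have hterm : ∀ t : ℝ, (∑' m, dirichletTerm μ c (σ + t * I) m) * cexp (μ n * (σ + t * I)) =
      ∑' m, d m * cexp ((μ n - μ m : ℝ) * t * I) := by
    intro t
    rw [← tsum_mul_right]
    congr 1 with m
    simp only [d, dirichletTerm, mul_assoc, ← Complex.exp_add]
    push_cast
    ring_nf
  have hd : Summable fun m => ‖d m‖ := by
    refine (hc.mul_left (Real.exp (μ n * σ))).congr fun m => ?_
    rw [norm_mul, Complex.norm_exp_ofReal, mul_left_comm, ← Real.exp_add]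
    ring_nf
  have hlim : (∑' m, if μ n - μ m = 0 then d m else 0) = c n := by
    simp_rw [sub_eq_zero, hμ.eq_iff, eq_comm (a := n), tsum_ite_eq]
    simp [d]
  simp_rw [hterm]
  exact hlim ▸ tendsto_intervalAverage_tsum_exp_mul_I hd _

lemma HasDirichletExpansion.norm_coeff_le {g : ℂ → ℂ} {α ε : ℝ}
    (hrep : HasDirichletExpansion μ c g α) (hμ : Function.Injective μ) {n : ℕ} (hμn : 0 ≤ μ n)
    (hg : DifferentiableOn ℂ g {s | 0 < s.re}) (hgε : ∀ s : ℂ, 0 < s.re → ‖g s‖ ≤ ε) :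
    ‖c n‖ ≤ ε := by
  set σ₂ : ℝ := max α 0 + 1
  have hσ₂ : 0 < σ₂ := by positivity
  have hασ₂ : α < σ₂ := by linarith [le_max_left α 0]
  have hline : ∀ t : ℝ, g (σ₂ + t * I) = ∑' m, dirichletTerm μ c (σ₂ + t * I) m := fun t =>
    ((hrep _ (by simpa using hασ₂)).2).symm
  set h : ℂ → ℂ := fun s => g s * cexp (μ n * s)
  have hmean : Tendsto (fun T : ℝ => ⨍ t in -T..T, h (σ₂ + t * I)) atTop (𝓝 (c n)) := by
    have hc : Summable fun m => ‖c m‖ * Real.exp (-μ m * σ₂) := by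
      simpa [norm_dirichletTerm] using (hrep σ₂ (by simpa using hασ₂)).1
    simpa only [h, hline] using tendsto_intervalAverage_dirichlet hμ hc n
  have hh : ∀ s : ℂ, 0 < s.re → ‖h s‖ ≤ ε * Real.exp (μ n * s.re) := by
    intro s hs
    rw [norm_mul, Complex.norm_exp]
    simp only [mul_re, ofReal_re, ofReal_im, zero_mul, sub_zero]
    gcongr
    exact hgε s hs
  have hε : 0 ≤ ε := (norm_nonneg _).trans (hgε 1 one_pos)
  -- shifting the line of integration from `σ₂` to `σ₁` costs `O(1 / T)`
  have hstrip : ∀ σ₁ ∈ Set.Ioo 0 σ₂, ‖c n‖ ≤ ε * Real.exp (μ n * σ₁) := by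
    rintro σ₁ ⟨hσ₁, hσ₁₂⟩
    have hshift : Tendsto (fun T : ℝ => ε * Real.exp (μ n * σ₁) +
        ε * Real.exp (μ n * σ₂) * (σ₂ - σ₁) / T) atTop (𝓝 (ε * Real.exp (μ n * σ₁))) := by
      simpa using tendsto_const_nhds.add (tendsto_const_nhds.div_atTop (tendsto_id (α := ℝ)))
    refine le_of_tendsto_of_tendsto hmean.norm hshift ?_
    filter_upwards [eventually_gt_atTop 0] with T hT
    have hstrip_pos : re ⁻¹' Set.Icc σ₁ σ₂ ⊆ {s | 0 < s.re} := fun s hs => hσ₁.trans_le hs.1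
    refine (norm_le_norm_add_norm_sub' _ (⨍ t in -T..T, h (σ₁ + t * I))).trans (add_le_add ?_ ?_)
    · refine norm_intervalAverage_le (by linarith) fun t _ => ?_
      simpa using hh (σ₁ + t * I) (by simpa using hσ₁)
    · refine norm_intervalAverage_vertical_sub_le hσ₁₂.le hT ?_ fun s hs => ?_
      · exact (hg.mul (by fun_prop)).mono hstrip_pos
      · exact (hh s (hstrip_pos hs)).trans (by gcongr; exact hs.2)
  have hlim : Tendsto (fun σ₁ => ε * Real.exp (μ n * σ₁)) (𝓝[>] 0) (𝓝 ε) := by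
    refine ((by fun_prop : Continuous fun σ₁ : ℝ => ε * Real.exp (μ n * σ₁)).tendsto' 0 ε
      (by simp)).mono_left nhdsWithin_le_nhds
  exact ge_of_tendsto hlim (eventually_of_mem (Ioo_mem_nhdsGT hσ₂) hstrip)

lemma summable_norm_dirichletTerm_of_le {u τ C : ℝ}
    (hC : ∀ m, ‖c m‖ * Real.exp (-μ m * u) ≤ C)
    (hτ : Summable fun m => Real.exp (-μ m * τ)) {s : ℂ} (hs : s.re = u + τ) :
    Summable fun m => ‖dirichletTerm μ c s m‖ := by
  refine (hτ.mul_left C).of_nonneg_of_le (fun m => norm_nonneg _) fun m => ?_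
  rw [norm_dirichletTerm, hs, mul_add, Real.exp_add, ← mul_assoc]
  gcongr
  exact hC m

lemma differentiableOn_tsum_dirichletTerm (hμ0 : ∀ m, 0 ≤ μ m) {α : ℝ}
    (hc : ∀ s : ℂ, α < s.re → Summable fun m => ‖dirichletTerm μ c s m‖) :
    DifferentiableOn ℂ (fun s => ∑' m, dirichletTerm μ c s m) {s | α < s.re} := by
  intro s₀ hs₀
  set σ : ℝ := (α + s₀.re) / 2
  have hs₀ : α < s₀.re := hs₀
  have hα : α < σ := by simp only [σ]; linarith
  have hσ : σ < s₀.re := by simp only [σ]; linarith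
  have hU : IsOpen {s : ℂ | σ < s.re} := isOpen_lt continuous_const continuous_re
  have hdiff := differentiableOn_tsum_of_summable_norm (F := fun m s => dirichletTerm μ c s m)
    (hc σ (by simpa using hα)) (fun m => by unfold dirichletTerm; fun_prop) hU fun m s hs => by
      have hs : σ < s.re := hs
      rw [norm_dirichletTerm, norm_dirichletTerm, ofReal_re]
      gcongr ‖c m‖ * Real.exp ?_
      nlinarith [hμ0 m]
  exact (hdiff.differentiableAt (hU.mem_nhds hσ)).differentiableWithinAt

lemma HasDirichletExpansion.extend (hμ0 : ∀ m, 0 ≤ μ m) {f : ℂ → ℂ} {α β : ℝ}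
    (hrep : HasDirichletExpansion μ c f β)
    (hc : ∀ s : ℂ, α < s.re → Summable fun m => ‖dirichletTerm μ c s m‖)
    (hf : DifferentiableOn ℂ f {s | α < s.re}) :
    HasDirichletExpansion μ c f α := by
  have hU : IsOpen {s : ℂ | α < s.re} := isOpen_lt continuous_const continuous_re
  set z₀ : ℂ := ((max α β + 1 : ℝ) : ℂ)
  have hz₀ : z₀.re = max α β + 1 := ofReal_re _
  have heq : (fun s => ∑' m, dirichletTerm μ c s m) =ᶠ[𝓝 z₀] f := by
    filter_upwards [(isOpen_lt continuous_const continuous_re).mem_nhds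
      (show β < z₀.re by rw [hz₀]; linarith [le_max_right α β])] with s hs using (hrep s hs).2
  refine fun s hs => ⟨hc s hs, ?_⟩
  exact ((differentiableOn_tsum_dirichletTerm hμ0 hc).analyticOnNhd hU)
    |>.eqOn_of_preconnected_of_eventuallyEq (hf.analyticOnNhd hU)
      (convex_halfSpace_re_gt α).isPreconnected
      (show α < z₀.re by rw [hz₀]; linarith [le_max_left α β]) heq hs

lemma HasDirichletExpansion.sub {c' : ℕ → ℂ} {f f' : ℂ → ℂ} {α : ℝ}
    (h : HasDirichletExpansion μ c f α) (h' : HasDirichletExpansion μ c' f' α) :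
    HasDirichletExpansion μ (c - c') (f - f') α := by
  intro s hs
  obtain ⟨hsum, htsum⟩ := h s hs
  obtain ⟨hsum', htsum'⟩ := h' s hs
  have hterm : dirichletTerm μ (c - c') s = dirichletTerm μ c s - dirichletTerm μ c' s := by
    ext m; simp [dirichletTerm, sub_mul]
  rw [hterm]
  refine ⟨(hsum.add hsum').of_nonneg_of_le (fun m => norm_nonneg _) fun m => norm_sub_le _ _, ?_⟩
  rw [Pi.sub_apply, ← htsum, ← htsum', ← (hsum.of_norm).tsum_sub hsum'.of_norm]
  rfl

end DirichletSeries

section Limits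

variable {μ : ℕ → ℝ}

lemma HasDirichletExpansion.of_tendstoUniformly {c : ℕ → ℕ → ℂ} {b : ℕ → ℂ}
    {f : ℕ → ℂ → ℂ} {F : ℂ → ℂ} {α : ℝ} (hrep : ∀ j, HasDirichletExpansion μ (c j) (f j) α)
    (hexp : ∀ σ, α < σ → Summable fun m => Real.exp (-μ m * σ))
    (hc : TendstoUniformly c b atTop)
    (hf : ∀ s : ℂ, α < s.re → Tendsto (fun j => f j s) atTop (𝓝 (F s))) :
    HasDirichletExpansion μ b F α := by
  intro s hs
  have hclose : ∀ᶠ j in atTop, ∀ m, ‖c j m - b m‖ ≤ 1 := by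
    filter_upwards [Metric.tendstoUniformly_iff.1 hc 1 one_pos] with j hj m
    rw [← dist_eq_norm, dist_comm]
    exact (hj m).le
  have hterm_le : ∀ {c₁ c₂ : ℕ → ℂ}, (∀ m, ‖c₁ m - c₂ m‖ ≤ 1) → ∀ m,
      ‖dirichletTerm μ c₁ s m‖ ≤ ‖dirichletTerm μ c₂ s m‖ + Real.exp (-μ m * s.re) := by
    intro c₁ c₂ h m
    rw [norm_dirichletTerm, norm_dirichletTerm, ← add_one_mul]
    gcongr
    exact norm_le_norm_add_norm_sub' (c₁ m) (c₂ m) |>.trans (by linarith [h m])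
  obtain ⟨j, hj⟩ := hclose.exists
  have hsum : Summable fun m => ‖dirichletTerm μ b s m‖ :=
    ((hrep j s hs).1.add (hexp _ hs)).of_nonneg_of_le (fun m => norm_nonneg _)
      (hterm_le fun m => by rw [norm_sub_rev]; exact hj m)
  refine ⟨hsum, tendsto_nhds_unique ?_ (hf s hs)⟩
  have hlim := tendsto_tsum_of_dominated_convergence (hsum.add (hexp _ hs))
    (fun m => (hc.tendsto_at m).mul_const _) (hclose.mono fun j hj => hterm_le hj)
  exact hlim.congr fun j => (hrep j s hs).2

lemma exists_tendstoUniformly_of_hasDirichletExpansion (hμ : Function.Injective μ)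
    (hμ0 : ∀ m, 0 ≤ μ m) {c : ℕ → ℕ → ℂ} {f : ℕ → ℂ → ℂ} {α : ℝ}
    (hrep : ∀ j, HasDirichletExpansion μ (c j) (f j) α)
    (hf : ∀ j, DifferentiableOn ℂ (f j) {s | 0 < s.re})
    (hcauchy : UniformCauchySeqOn f atTop {s | 0 < s.re}) :
    ∃ b : ℕ → ℂ, TendstoUniformly c b atTop := by
  have hc : UniformCauchySeqOn c atTop Set.univ := by
    rw [Metric.uniformCauchySeqOn_iff] at hcauchy ⊢
    intro ε hε
    obtain ⟨N, hN⟩ := hcauchy (ε / 2) (half_pos hε)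
    refine ⟨N, fun j hj k hk m _ => ?_⟩
    have hjk := ((hrep j).sub (hrep k)).norm_coeff_le hμ (hμ0 m) ((hf j).sub (hf k))
      fun s hs => (dist_eq_norm (f j s) (f k s)).symm.trans_le (hN j hj k hk s hs).le
    rw [dist_eq_norm]
    exact hjk.trans_lt (half_lt_self hε)
  exact ⟨fun m => limUnder atTop fun j => c j m, tendstoUniformlyOn_univ.1 <|
    hc.tendstoUniformlyOn_of_tendsto fun m _ => (hc.cauchySeq (Set.mem_univ m)).tendsto_limUnder⟩

end Limits

section Frequency

variable {lam : ℕ → ℝ}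

lemma IsFrequency.strictMono_succ (h : IsFrequency lam) : StrictMono fun m => lam (m + 1) :=
  strictMono_nat_of_lt_succ fun m => h.1 (m + 1) (Nat.le_add_left 1 m)

lemma IsFrequency.nonneg_succ (h : IsFrequency lam) (m : ℕ) : 0 ≤ lam (m + 1) :=
  h.2.1.trans (h.strictMono_succ.monotone (Nat.zero_le m))

lemma limsup_log_div_nonneg (hlam : Tendsto lam atTop atTop)
    (hbd : IsBoundedUnder (· ≤ ·) atTop (fun N : ℕ => Real.log N / lam N)) :
    0 ≤ limsup (fun N : ℕ => Real.log N / lam N) atTop := by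
  refine le_limsup_of_frequently_le (Eventually.frequently ?_) hbd
  filter_upwards [hlam.eventually_ge_atTop 0] with N hN
  exact div_nonneg (Real.log_natCast_nonneg N) hN

lemma summable_exp_neg_mul_of_limsup_lt (hlam : Tendsto lam atTop atTop)
    (hbd : IsBoundedUnder (· ≤ ·) atTop (fun N : ℕ => Real.log N / lam N)) {σ : ℝ}
    (hσ : limsup (fun N : ℕ => Real.log N / lam N) atTop < σ) :
    Summable fun N => Real.exp (-lam N * σ) := by
  set L := limsup (fun N : ℕ => Real.log N / lam N) atTop
  have hL : 0 ≤ L := limsup_log_div_nonneg hlam hbd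
  obtain ⟨κ, hLκ, hκσ⟩ := exists_between hσ
  have hκ : 0 < κ := hL.trans_lt hLκ
  have hσκ : 1 < σ / κ := by rw [one_lt_div hκ]; exact hκσ
  -- eventually `log N < κ λ_N`, so `e^{-λ_N σ} ≤ N^{-σ/κ}`
  refine (Real.summable_nat_rpow.2 (neg_lt_neg hσκ)).of_norm_bounded_eventually_nat ?_
  filter_upwards [hlam.eventually_gt_atTop 0, eventually_gt_atTop 0,
    eventually_lt_of_limsup_lt hLκ hbd] with N hlamN hN hlog
  rw [Real.norm_eq_abs, abs_of_pos (Real.exp_pos _), Real.rpow_def_of_pos (by positivity)]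
  rw [div_lt_iff₀ hlamN] at hlog
  refine Real.exp_le_exp.2 ?_
  have : Real.log N * (σ / κ) ≤ lam N * σ := by
    rw [mul_div_assoc', div_le_iff₀ hκ]
    nlinarith
  linarith

lemma partialSum_eq_sum_range (a : ℕ → ℂ) (N : ℕ) (s : ℂ) :
    partialSum lam a N s =
      ∑ m ∈ range N, dirichletTerm (fun m => lam (m + 1)) (fun m => a (m + 1)) s m := by
  rw [partialSum, ← Finset.Ico_add_one_right_eq_Icc, Finset.sum_Ico_eq_sum_range]
  exact Finset.sum_congr rfl fun m _ => by rw [Nat.add_comm 1 m]; rfl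

lemma tendsto_partialSum_of_hasDirichletExpansion {b : ℕ → ℂ} {F : ℂ → ℂ} {L : ℝ}
    (hrep : HasDirichletExpansion (fun m => lam (m + 1)) (fun m => b (m + 1)) F L) {s : ℂ}
    (hs : L < s.re) : Tendsto (fun N => partialSum lam b N s) atTop (𝓝 (F s)) := by
  simpa only [partialSum_eq_sum_range, (hrep s hs).2] using
    (hrep s hs).1.of_norm.hasSum.tendsto_sum_nat

lemma memDExt_of_hasDirichletExpansion {b : ℕ → ℂ} {F : ℂ → ℂ} {M L : ℝ} (hL : 0 ≤ L)
    (hrep : HasDirichletExpansion (fun m => lam (m + 1)) (fun m => b (m + 1)) F L)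
    (hF : DifferentiableOn ℂ F {s | 0 < s.re}) (hFM : ∀ s : ℂ, 0 < s.re → ‖F s‖ ≤ M) :
    MemDExt lam b F M :=
  ⟨⟨L, fun s hs => ⟨F s, tendsto_partialSum_of_hasDirichletExpansion hrep hs⟩,
    fun s hs => tendsto_partialSum_of_hasDirichletExpansion hrep (by rwa [max_eq_left hL] at hs)⟩,
    hF, hFM⟩

namespace MemDExt

variable {a : ℕ → ℂ} {f : ℂ → ℂ} {M L : ℝ}

lemma exists_hasDirichletExpansion (h : MemDExt lam a f M)
    (hexp : ∀ τ, L < τ → Summable fun m => Real.exp (-lam (m + 1) * τ)) :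
    ∃ A, HasDirichletExpansion (fun m => lam (m + 1)) (fun m => a (m + 1)) f A := by
  obtain ⟨⟨σ₀, hconv, hlim⟩, -, -⟩ := h
  set u : ℝ := max σ₀ 0 + 1
  have hσ₀u : σ₀ < u := by linarith [le_max_left σ₀ 0]
  obtain ⟨S, hS⟩ := hconv u (by simpa using hσ₀u)
  have hterm : Tendsto (dirichletTerm (fun m => lam (m + 1)) (fun m => a (m + 1)) u) atTop
      (𝓝 0) := by
    have hdiff := (hS.comp (tendsto_add_atTop_nat 1)).sub hS
    rw [sub_self] at hdiff
    refine hdiff.congr fun m => ?_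
    simp [partialSum_eq_sum_range, Finset.sum_range_succ]
  obtain ⟨C, hC⟩ := hterm.norm.bddAbove_range
  refine ⟨u + max L 0, fun s hs => ?_⟩
  have hsum := summable_norm_dirichletTerm_of_le (u := u) (τ := s.re - u)
    (fun m => by simpa [norm_dirichletTerm] using hC ⟨m, rfl⟩)
    (hexp _ (by linarith [le_max_left L 0])) (by ring)
  refine ⟨hsum, tendsto_nhds_unique ?_ (hlim s (by linarith [le_max_right L 0]))⟩
  simpa only [partialSum_eq_sum_range] using hsum.of_norm.hasSum.tendsto_sum_nat

lemma norm_coeff_le (h : MemDExt lam a f M) (hfreq : IsFrequency lam)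
    (hexp : ∀ τ, L < τ → Summable fun m => Real.exp (-lam (m + 1) * τ)) (m : ℕ) :
    ‖a (m + 1)‖ ≤ M :=
  have ⟨_, hA⟩ := h.exists_hasDirichletExpansion hexp
  hA.norm_coeff_le hfreq.strictMono_succ.injective (hfreq.nonneg_succ m) h.2.1 h.2.2

lemma hasDirichletExpansion (h : MemDExt lam a f M) (hfreq : IsFrequency lam) (hL : 0 ≤ L)
    (hexp : ∀ τ, L < τ → Summable fun m => Real.exp (-lam (m + 1) * τ)) :
    HasDirichletExpansion (fun m => lam (m + 1)) (fun m => a (m + 1)) f L := by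
  obtain ⟨A, hA⟩ := h.exists_hasDirichletExpansion hexp
  refine hA.extend hfreq.nonneg_succ (fun s hs => ?_) (h.2.1.mono fun s hs => hL.trans_lt hs)
  exact summable_norm_dirichletTerm_of_le (u := 0) (fun m => by
    simpa using h.norm_coeff_le hfreq hexp m) (hexp _ hs) (zero_add _).symm

end MemDExt

end Frequency

/-- Completeness of `D∞^ext(λ)` when `L(λ) = limsup (log N)/λ_N < ∞`. -/
theorem dExt_closed_of_L_finite (lam : ℕ → ℝ) (hfreq : IsFrequency lam)
    (hbd : IsBoundedUnder (· ≤ ·) atTop (fun N : ℕ => Real.log N / lam N))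
    (a : ℕ → ℕ → ℂ) (f : ℕ → ℂ → ℂ) (M : ℕ → ℝ) (F : ℂ → ℂ)
    (hmem : ∀ j : ℕ, MemDExt lam (a j) (f j) (M j))
    (hunif : ∀ δ : ℝ, 0 < δ → ∃ j₀ : ℕ, ∀ j : ℕ, j₀ ≤ j → ∀ s : ℂ, 0 < s.re →
      ‖f j s - F s‖ ≤ δ) :
    ∃ b : ℕ → ℂ,
      (∀ n : ℕ, 1 ≤ n → Tendsto (fun j => a j n) atTop (nhds (b n))) ∧
      (∀ s : ℂ, limsup (fun N : ℕ => Real.log N / lam N) atTop < s.re →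
        Summable (fun n : ℕ =>
          ‖b (n + 1) * Complex.exp (-(lam (n + 1) : ℂ) * s)‖) ∧
        (∑' n : ℕ, b (n + 1) * Complex.exp (-(lam (n + 1) : ℂ) * s)) = F s) ∧
      (∃ M' : ℝ, MemDExt lam b F M') := by
  set L := limsup (fun N : ℕ => Real.log N / lam N) atTop
  have hL : 0 ≤ L := limsup_log_div_nonneg hfreq.2.2 hbd
  have hexp : ∀ τ, L < τ → Summable fun m => Real.exp (-lam (m + 1) * τ) := fun τ hτ =>
    (summable_nat_add_iff 1).2 (summable_exp_neg_mul_of_limsup_lt hfreq.2.2 hbd hτ)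
  have hrep j := (hmem j).hasDirichletExpansion hfreq hL hexp
  have hF : TendstoUniformlyOn f F atTop {s | 0 < s.re} := by
    refine Metric.tendstoUniformlyOn_iff.2 fun ε hε => ?_
    obtain ⟨j₀, hj₀⟩ := hunif (ε / 2) (half_pos hε)
    filter_upwards [eventually_ge_atTop j₀] with j hj s hs
    rw [dist_comm, dist_eq_norm]
    exact (hj₀ j hj s hs).trans_lt (half_lt_self hε)
  obtain ⟨b, hb⟩ := exists_tendstoUniformly_of_hasDirichletExpansion
    hfreq.strictMono_succ.injective hfreq.nonneg_succ hrep (fun j => (hmem j).2.1)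
    hF.uniformCauchySeqOn
  have hbrep : HasDirichletExpansion (fun m => lam (m + 1)) b F L :=
    .of_tendstoUniformly hrep hexp hb fun s hs => hF.tendsto_at (hL.trans_lt hs)
  -- `b (n + 1 - 1)` reduces to `b n`, so `hbrep` is literally the second conjunct
  refine ⟨fun n => b (n - 1), fun n hn => ?_, hbrep, ?_⟩
  · obtain ⟨m, rfl⟩ := Nat.exists_eq_add_of_le' hn
    exact hb.tendsto_at m
  · obtain ⟨j, hj⟩ := hunif 1 one_pos
    refine ⟨M j + 1, memDExt_of_hasDirichletExpansion hL hbrep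
      (hF.tendstoLocallyUniformlyOn.differentiableOn (Eventually.of_forall fun j => (hmem j).2.1)
        (isOpen_lt continuous_const continuous_re)) fun s hs => ?_⟩
    calc ‖F s‖ ≤ ‖f j s‖ + ‖f j s - F s‖ := norm_le_norm_add_norm_sub _ _
      _ ≤ M j + 1 := add_le_add ((hmem j).2.2 s hs) (hj j le_rfl s hs)
end

section
/- For every frequency λ there exist: a sequence (s_n) of positive integers, coefficients (a_m) ⊂ ℂ, a strictly increasing sequence of indices (N_K), and a real number x > 0, such that, denoting by η the strictly increasing enumeration of the set {λ_n + (j/s_n)(λ_{n+1} − λ_n) : n ≥ 1, j = 0, 1, …, s_n − 1} (which is again a frequency), the partial sums P_K(s) = ∑_{m=1}^{N_K} a_m e^{−η_m s} form a uniformly Cauchy sequence on the half-plane {s : Re s > 0}, while the series ∑_m a_m e^{−η_m x} does not converge. (Consequently the normed space D∞(η) of η-Dirichlet series converging and bounded on the right half-plane is not complete.) -/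
open Filter Finset Complex MeasureTheory Topology

/-!
Neder's construction. Cut the indices into consecutive blocks, the `n`-th of length
`2 r_n + 1`, carrying the equidistant points between `λ_n` and `λ_{n+1}`, and give block `n`
the coefficients `β_n / (r_n - j)`, `j = 0, …, 2 r_n`. Since the nodes are equidistant, the block
equals `β_n e^{-λ_n s}` times the Fejér polynomial `∑_{k=1}^{r} (w^{r-k} - w^{r+k}) / k` at a
point `w` of the closed unit disc. On the unit circle that polynomial is
`-2i w^r ∑_{k ≤ r} sin (kθ) / k`, and these sine sums are uniformly bounded; by the maximum
modulus principle every block is `O(β_n)` on `Re s > 0`, so with `β_n = 2^{-n}` the partial sums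
ending at block ends are uniformly Cauchy. At `s = 1`, however, the first `r_n` terms of block `n`
are positive and add up to at least `β_n e^{-λ_{n+1}} H_{r_n}`, which is `≥ 1` once the harmonic
number `H_{r_n}` is large enough.
-/

open scoped Real

section Trigonometric

theorem two_mul_sin_half_mul_sum_range_sin (t a : ℝ) (p : ℕ) :
    2 * Real.sin (t / 2) * ∑ i ∈ range p, Real.sin ((a + i) * t) =
      Real.cos ((a - 1 / 2) * t) - Real.cos ((a + p - 1 / 2) * t) := by
  induction p with
  | zero => simp
  | succ p ih =>
    rw [sum_range_succ, mul_add, ih, Real.two_mul_sin_mul_sin, ← Real.cos_neg (t / 2 - _)]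
    push_cast
    ring_nf

theorem abs_sum_range_sin_le {t : ℝ} (ht : 0 < t) (htπ : t ≤ π) (a : ℝ) (p : ℕ) :
    |∑ i ∈ range p, Real.sin ((a + i) * t)| ≤ π / t := by
  have hsin : t / π ≤ Real.sin (t / 2) := by
    have := Real.mul_le_sin (x := t / 2) (by positivity) (by linarith)
    calc t / π = 2 / π * (t / 2) := by ring
      _ ≤ _ := this
  have hsin_pos : 0 < Real.sin (t / 2) := lt_of_lt_of_le (by positivity) hsin
  have hcos : |2 * Real.sin (t / 2) * ∑ i ∈ range p, Real.sin ((a + i) * t)| ≤ 2 := by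
    rw [two_mul_sin_half_mul_sum_range_sin]
    refine (abs_sub _ _).trans ?_
    linarith [Real.abs_cos_le_one ((a - 1 / 2) * t), Real.abs_cos_le_one ((a + p - 1 / 2) * t)]
  rw [abs_mul, abs_of_pos (by positivity : 0 < 2 * Real.sin (t / 2))] at hcos
  calc |∑ i ∈ range p, Real.sin ((a + i) * t)| ≤ 1 / Real.sin (t / 2) := by
        rw [le_div_iff₀ hsin_pos]; linarith
    _ ≤ 1 / (t / π) := one_div_le_one_div_of_le (by positivity) hsin
    _ = π / t := one_div_div t π

theorem norm_sum_range_smul_le_of_antitone {E : Type*} [NormedAddCommGroup E] [NormedSpace ℝ E]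
    {f : ℕ → ℝ} {g : ℕ → E} {B : ℝ} {n : ℕ} (hf : Antitone f) (hf0 : ∀ i, 0 ≤ f i)
    (hg : ∀ k ≤ n, ‖∑ i ∈ range k, g i‖ ≤ B) :
    ‖∑ i ∈ range n, f i • g i‖ ≤ B * f 0 := by
  rw [sum_range_by_parts]
  calc _ ≤ ‖f (n - 1) • ∑ i ∈ range n, g i‖
          + ‖∑ i ∈ range (n - 1), (f (i + 1) - f i) • ∑ j ∈ range (i + 1), g j‖ :=
        norm_sub_le _ _
    _ ≤ f (n - 1) * B + ∑ i ∈ range (n - 1), (f i - f (i + 1)) * B := by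
        gcongr
        · rw [norm_smul, Real.norm_of_nonneg (hf0 _)]
          exact mul_le_mul_of_nonneg_left (hg n le_rfl) (hf0 _)
        · refine (norm_sum_le _ _).trans (sum_le_sum fun i hi => ?_)
          have hi : i + 1 ≤ n := by rw [mem_range] at hi; omega
          rw [norm_smul, Real.norm_eq_abs, abs_sub_comm,
            abs_of_nonneg (sub_nonneg.2 (hf (Nat.le_succ i)))]
          exact mul_le_mul_of_nonneg_left (hg _ hi) (sub_nonneg.2 (hf (Nat.le_succ i)))
    _ = B * f 0 := by rw [← sum_mul, sum_range_sub']; ring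

theorem abs_sum_range_sin_div_le_mul {t : ℝ} (ht : 0 ≤ t) (r : ℕ) :
    |∑ k ∈ range r, Real.sin ((k + 1) * t) / (k + 1)| ≤ r * t := by
  refine (abs_sum_le_sum_abs _ _).trans ?_
  calc ∑ k ∈ range r, |Real.sin ((k + 1) * t) / (k + 1)| ≤ ∑ k ∈ range r, t := by
        refine sum_le_sum fun k _ => ?_
        rw [abs_div, abs_of_pos (by positivity : (0 : ℝ) < k + 1), div_le_iff₀ (by positivity)]
        calc |Real.sin ((k + 1) * t)| ≤ |(k + 1) * t| := Real.abs_sin_le_abs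
          _ = t * (k + 1) := by rw [abs_of_nonneg (by positivity)]; ring
    _ = r * t := by simp

theorem abs_sum_range_sin_div_tail_le {t : ℝ} (ht : 0 < t) (htπ : t ≤ π) (m p : ℕ) :
    |∑ k ∈ range p, Real.sin ((↑(m + k) + 1) * t) / (↑(m + k) + 1)| ≤ π / (t * (m + 1)) := by
  have hterm (k : ℕ) : Real.sin ((↑(m + k) + 1) * t) / (↑(m + k) + 1) =
      (1 / ((m + 1 : ℝ) + k)) • Real.sin (((m + 1 : ℝ) + k) * t) := by
    rw [smul_eq_mul]
    push_cast
    ring_nf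
  have hanti : Antitone fun k : ℕ => 1 / ((m + 1 : ℝ) + k) :=
    fun a b hab => one_div_le_one_div_of_le (by positivity) (by gcongr)
  have hAbel := norm_sum_range_smul_le_of_antitone (n := p) hanti (fun k => by positivity)
    (g := fun k => Real.sin (((m + 1 : ℝ) + k) * t))
    fun k _ => (Real.norm_eq_abs _).trans_le (abs_sum_range_sin_le ht htπ (m + 1) k)
  simp only [hterm, ← Real.norm_eq_abs]
  calc _ ≤ π / t * (1 / ((m + 1 : ℝ) + 0)) := hAbel.trans_eq (by simp)
    _ = π / (t * (m + 1)) := by rw [add_zero, div_mul_div_comm, mul_one]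

theorem abs_sum_range_sin_div_le_of_pos {t : ℝ} (ht : 0 < t) (htπ : t ≤ π) (r : ℕ) :
    |∑ k ∈ range r, Real.sin ((k + 1) * t) / (k + 1)| ≤ π + 1 := by
  -- split at `m ≈ 1 / t`: the head is small termwise, the tail by Abel's inequality
  set m := ⌊1 / t⌋₊
  have hm : m * t ≤ 1 := by
    have := Nat.floor_le (one_div_pos.2 ht).le
    rwa [le_div_iff₀ ht] at this
  have hm' : 1 ≤ t * (m + 1) := by
    have := Nat.lt_floor_add_one (1 / t)
    rw [div_lt_iff₀ ht] at this
    linarith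
  rcases le_or_gt r m with hr | hr
  · calc _ ≤ r * t := abs_sum_range_sin_div_le_mul ht.le r
      _ ≤ m * t := by gcongr
      _ ≤ π + 1 := by linarith [Real.pi_pos]
  obtain ⟨p, rfl⟩ := Nat.exists_eq_add_of_le hr.le
  rw [sum_range_add]
  calc _ ≤ |∑ k ∈ range m, Real.sin ((k + 1) * t) / (k + 1)|
          + |∑ k ∈ range p, Real.sin ((↑(m + k) + 1) * t) / (↑(m + k) + 1)| := abs_add_le _ _
    _ ≤ 1 + π := by
        gcongr
        · exact (abs_sum_range_sin_div_le_mul ht.le m).trans hm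
        · exact (abs_sum_range_sin_div_tail_le ht htπ m p).trans
            (div_le_self Real.pi_pos.le hm')
    _ = π + 1 := add_comm _ _

theorem abs_sum_range_sin_div_le_of_abs_le {t : ℝ} (ht : |t| ≤ π) (r : ℕ) :
    |∑ k ∈ range r, Real.sin ((k + 1) * t) / (k + 1)| ≤ π + 1 := by
  rcases lt_trichotomy t 0 with h | rfl | h
  · have := abs_sum_range_sin_div_le_of_pos (neg_pos.2 h) (by linarith [neg_abs_le t]) r
    simpa only [mul_neg, Real.sin_neg, neg_div, sum_neg_distrib, abs_neg] using this
  · simp only [mul_zero, Real.sin_zero, zero_div, sum_const_zero, abs_zero]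
    positivity
  · exact abs_sum_range_sin_div_le_of_pos h (le_of_abs_le ht) r

theorem abs_sum_range_sin_div_le (θ : ℝ) (r : ℕ) :
    |∑ k ∈ range r, Real.sin ((k + 1) * θ) / (k + 1)| ≤ π + 1 := by
  obtain ⟨t, n, ht, rfl⟩ : ∃ (t : ℝ) (n : ℤ), |t| ≤ π ∧ θ = t + n * (2 * π) := by
    refine ⟨toIocMod Real.two_pi_pos (-π) θ, toIocDiv Real.two_pi_pos (-π) θ, ?_, ?_⟩
    · have := toIocMod_mem_Ioc Real.two_pi_pos (-π) θ
      rw [abs_le]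
      constructor <;> linarith [this.1, this.2]
    · rw [← zsmul_eq_mul, toIocMod_add_toIocDiv_zsmul]
  have hperiodic (k : ℕ) : Real.sin ((k + 1) * (t + n * (2 * π))) = Real.sin ((k + 1) * t) := by
    rw [show (k + 1) * (t + n * (2 * π)) = (k + 1) * t + ((k + 1 : ℤ) * n : ℤ) * (2 * π) by
      push_cast; ring, Real.sin_add_int_mul_two_pi]
  simp only [hperiodic]
  exact abs_sum_range_sin_div_le_of_abs_le ht r

end Trigonometric

section Fejer

noncomputable def fejerPoly (q : ℕ) (w : ℂ) : ℂ :=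
  ∑ k ∈ range q, (w ^ (q - (k + 1)) - w ^ (q + (k + 1))) / (k + 1)

theorem fejerPoly_exp_mul_I (q : ℕ) (θ : ℝ) :
    fejerPoly q (exp (θ * I)) =
      -2 * I * exp (q * θ * I) * ((∑ k ∈ range q, Real.sin ((k + 1) * θ) / (k + 1) : ℝ) : ℂ) := by
  rw [fejerPoly, ofReal_sum, mul_sum]
  refine sum_congr rfl fun k hk => ?_
  have hkq : k + 1 ≤ q := mem_range.1 hk
  rw [← exp_nat_mul, ← exp_nat_mul, Nat.cast_sub hkq, ofReal_div, ofReal_sin]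
  push_cast
  rw [Complex.sin]
  have hk0 : (k : ℂ) + 1 ≠ 0 := by norm_cast
  field_simp
  rw [show ((q : ℂ) - (k + 1)) * θ * I = q * θ * I + -((k + 1) * θ * I) by ring,
    show θ * I * ((q : ℂ) + (k + 1)) = q * θ * I + (k + 1) * θ * I by ring, exp_add, exp_add, I_sq]
  ring

theorem norm_fejerPoly_le_of_norm_eq_one (q : ℕ) {w : ℂ} (hw : ‖w‖ = 1) :
    ‖fejerPoly q w‖ ≤ 2 * (π + 1) := by
  have hwθ : w = exp (arg w * I) := by
    simpa [hw] using (norm_mul_exp_arg_mul_I w).symm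
  have hrot : ‖exp (q * arg w * I)‖ = 1 := by exact_mod_cast norm_exp_ofReal_mul_I (q * arg w)
  have htwo : ‖-2 * I‖ = 2 := by simp
  rw [hwθ, fejerPoly_exp_mul_I, norm_mul, norm_mul, hrot, htwo, norm_real, Real.norm_eq_abs,
    mul_one]
  gcongr
  exact abs_sum_range_sin_div_le _ q

theorem norm_fejerPoly_le (q : ℕ) {w : ℂ} (hw : ‖w‖ ≤ 1) : ‖fejerPoly q w‖ ≤ 2 * (π + 1) := by
  have hdiff : Differentiable ℂ (fejerPoly q) := by
    unfold fejerPoly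
    fun_prop
  refine Complex.norm_le_of_forall_mem_frontier_norm_le (U := Metric.ball 0 1)
    Metric.isBounded_ball hdiff.diffContOnCl (fun z hz => ?_) (z := w) ?_
  · rw [frontier_ball (0 : ℂ) one_ne_zero, mem_sphere_zero_iff_norm] at hz
    exact norm_fejerPoly_le_of_norm_eq_one q hz
  · rwa [closure_ball (0 : ℂ) one_ne_zero, Metric.mem_closedBall, dist_zero_right]

theorem sum_range_inv_sub_mul_pow (q : ℕ) (w : ℂ) :
    ∑ j ∈ range (2 * q + 1), ((q : ℂ) - j)⁻¹ * w ^ j = fejerPoly q w := by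
  rw [show 2 * q + 1 = q + (q + 1) by ring, sum_range_add, sum_range_succ', ← sum_range_reflect,
    fejerPoly, add_zero, sub_self, inv_zero, zero_mul, add_zero, ← sum_add_distrib]
  refine sum_congr rfl fun k hk => ?_
  have hkq : k + 1 ≤ q := mem_range.1 hk
  rw [show q - 1 - k = q - (k + 1) by omega, Nat.cast_sub hkq]
  push_cast
  rw [show (q : ℂ) - (q - (k + 1)) = k + 1 by ring, show (q : ℂ) - (q + (k + 1)) = -(k + 1) by ring,
    inv_neg]
  ring

end Fejer

noncomputable def blockSum (lam : ℕ → ℝ) (a : ℕ → ℂ) (b q : ℕ) (z : ℂ) : ℂ :=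
  ∑ j ∈ range q, a (b + j) * exp (-(lam (b + j) : ℂ) * z)

theorem partialSum_add (lam : ℕ → ℝ) (a : ℕ → ℂ) (N q : ℕ) (z : ℂ) :
    partialSum lam a (N + q) z = partialSum lam a N z + blockSum lam a (N + 1) q z := by
  induction q with
  | zero => simp [blockSum]
  | succ q ih =>
    rw [← add_assoc, partialSum, sum_Icc_succ_top (by omega), ← partialSum, ih, blockSum,
      blockSum, sum_range_succ, add_assoc, add_right_comm N 1 q]

section Blocks

variable {s : ℕ → ℕ}

-- Blocks are indexed from `n = 1`; block `n` is the `s n` indices starting at `blockStart s n`.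
variable (s) in
def blockStart (n : ℕ) : ℕ := 1 + ∑ i ∈ Ico 1 n, s i

variable (s) in
def blockIndex (m : ℕ) : ℕ := Nat.findGreatest (fun n => blockStart s n ≤ m) m

variable (s) in
def blockwise {α : Type*} (f : ℕ → ℕ → α) (m : ℕ) : α :=
  f (blockIndex s m) (m - blockStart s (blockIndex s m))

theorem blockStart_one : blockStart s 1 = 1 := by simp [blockStart]

theorem one_le_blockStart (n : ℕ) : 1 ≤ blockStart s n := Nat.le_add_right 1 _

theorem blockStart_succ {n : ℕ} (hn : 1 ≤ n) : blockStart s (n + 1) = blockStart s n + s n := by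
  rw [blockStart, blockStart, sum_Ico_succ_top hn, add_assoc]

theorem blockStart_mono : Monotone (blockStart s) := fun _ _ hab =>
  Nat.add_le_add_left (sum_le_sum_of_subset (Ico_subset_Ico le_rfl hab)) 1

theorem le_blockStart (hs : ∀ n, 1 ≤ s n) (n : ℕ) : n ≤ blockStart s n := by
  calc n ≤ 1 + #(Ico 1 n) := by rw [Nat.card_Ico]; omega
    _ ≤ blockStart s n := by
      rw [card_eq_sum_ones]
      exact Nat.add_le_add_left (sum_le_sum fun i _ => hs i) 1

theorem exists_eq_blockStart_add (hs : ∀ n, 1 ≤ s n) {m : ℕ} (hm : 1 ≤ m) :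
    ∃ n j, 1 ≤ n ∧ j < s n ∧ m = blockStart s n + j := by
  have hB1 : blockStart s 1 ≤ m := by rwa [blockStart_one]
  set n := blockIndex s m
  have hn : 1 ≤ n := Nat.le_findGreatest hm hB1
  have hle : blockStart s n ≤ m := Nat.findGreatest_spec (P := fun k => blockStart s k ≤ m) hm hB1
  have hlt : m < blockStart s (n + 1) := by
    by_contra! h
    exact Nat.findGreatest_is_greatest (Nat.lt_succ_self n) ((le_blockStart hs _).trans h) h
  rw [blockStart_succ hn] at hlt
  exact ⟨n, m - blockStart s n, hn, by omega, by omega⟩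

theorem blockIndex_blockStart_add (hs : ∀ n, 1 ≤ s n) {n j : ℕ} (hn : 1 ≤ n) (hj : j < s n) :
    blockIndex s (blockStart s n + j) = n := by
  have hle : blockStart s n ≤ blockStart s n + j := Nat.le_add_right _ _
  have hnm : n ≤ blockStart s n + j := (le_blockStart hs n).trans hle
  refine le_antisymm ?_ (Nat.le_findGreatest hnm hle)
  by_contra! h
  have hidx := Nat.findGreatest_spec (P := fun k => blockStart s k ≤ blockStart s n + j) hnm hle
  have hmono := blockStart_mono (s := s) (Nat.succ_le_of_lt h)
  rw [blockStart_succ hn] at hmono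
  exact absurd (hmono.trans hidx) (by omega)

theorem blockwise_blockStart_add (hs : ∀ n, 1 ≤ s n) {α : Type*} (f : ℕ → ℕ → α) {n j : ℕ}
    (hn : 1 ≤ n) (hj : j < s n) : blockwise s f (blockStart s n + j) = f n j := by
  rw [blockwise, blockIndex_blockStart_add hs hn hj, Nat.add_sub_cancel_left]

theorem tendsto_blockIndex (hs : ∀ n, 1 ≤ s n) : Tendsto (blockIndex s) atTop atTop :=
  tendsto_atTop_atTop.2 fun n =>
    ⟨blockStart s n, fun _ hm => Nat.le_findGreatest ((le_blockStart hs n).trans hm) hm⟩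

theorem strictMono_blockStart_succ_sub_one (hs : ∀ n, 1 ≤ s n) :
    StrictMono fun K => blockStart s (K + 1) - 1 :=
  strictMono_nat_of_lt_succ fun K => by
    have := blockStart_succ (s := s) (Nat.le_add_left 1 K)
    have := one_le_blockStart (s := s) (K + 1)
    have := hs (K + 1)
    omega

theorem partialSum_blockStart_succ_sub_one (lam : ℕ → ℝ) (a : ℕ → ℂ) (K : ℕ) (z : ℂ) :
    partialSum lam a (blockStart s (K + 1) - 1) z =
      ∑ n ∈ range K, blockSum lam a (blockStart s (n + 1)) (s (n + 1)) z := by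
  induction K with
  | zero => simp [blockStart_one, partialSum]
  | succ K ih =>
    have h := one_le_blockStart (s := s) (K + 1)
    rw [blockStart_succ (Nat.le_add_left 1 K), show blockStart s (K + 1) + s (K + 1) - 1 =
      blockStart s (K + 1) - 1 + s (K + 1) by omega, partialSum_add, ih, sum_range_succ,
      Nat.sub_add_cancel h]

end Blocks

section Refinement

variable {lam : ℕ → ℝ} {s : ℕ → ℕ}

theorem IsFrequency.nonneg (hlam : IsFrequency lam) {n : ℕ} (hn : 1 ≤ n) : 0 ≤ lam n := by
  induction n, hn using Nat.le_induction with
  | base => exact hlam.2.1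
  | succ n hn ih => exact ih.trans (hlam.1 n hn).le

variable (lam s) in
noncomputable def equidistantRefinement : ℕ → ℝ :=
  blockwise s fun n j => lam n + (j / s n : ℝ) * (lam (n + 1) - lam n)

theorem equidistantRefinement_blockStart_add (hs : ∀ n, 1 ≤ s n) {n j : ℕ} (hn : 1 ≤ n)
    (hj : j < s n) :
    equidistantRefinement lam s (blockStart s n + j) =
      lam n + (j / s n : ℝ) * (lam (n + 1) - lam n) :=
  blockwise_blockStart_add hs _ hn hj

theorem equidistantRefinement_blockStart_add_mem_Icc (hlam : IsFrequency lam)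
    (hs : ∀ n, 1 ≤ s n) {n j : ℕ} (hn : 1 ≤ n) (hj : j < s n) :
    equidistantRefinement lam s (blockStart s n + j) ∈ Set.Icc (lam n) (lam (n + 1)) := by
  have hd := sub_pos.2 (hlam.1 n hn)
  have hfrac : (j / s n : ℝ) ≤ 1 := div_le_one_of_le₀ (by exact_mod_cast hj.le) (by positivity)
  rw [equidistantRefinement_blockStart_add hs hn hj]
  constructor <;> nlinarith [show (0 : ℝ) ≤ j / s n by positivity]

theorem IsFrequency.equidistantRefinement (hlam : IsFrequency lam) (hs : ∀ n, 1 ≤ s n) :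
    IsFrequency (equidistantRefinement lam s) := by
  refine ⟨fun m hm => ?_, ?_, ?_⟩
  · obtain ⟨n, j, hn, hj, rfl⟩ := exists_eq_blockStart_add hs hm
    have hd := sub_pos.2 (hlam.1 n hn)
    have hsn : (0 : ℝ) < s n := by exact_mod_cast hs n
    rw [equidistantRefinement_blockStart_add hs hn hj]
    rcases (Nat.succ_le_of_lt hj).lt_or_eq with hlt | heq
    · rw [add_assoc, equidistantRefinement_blockStart_add hs hn hlt]
      gcongr
      linarith
    · rw [show blockStart s n + j + 1 = blockStart s (n + 1) + 0 by rw [blockStart_succ hn]; omega,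
        equidistantRefinement_blockStart_add hs (by omega) (hs _)]
      have hfrac : (j / s n : ℝ) < 1 := (div_lt_one hsn).2 (by exact_mod_cast hj)
      simp only [CharP.cast_eq_zero, zero_div, zero_mul, add_zero]
      nlinarith
  · rw [← blockStart_one (s := s), ← add_zero (blockStart s 1)]
    exact (hlam.2.1).trans (equidistantRefinement_blockStart_add_mem_Icc hlam hs le_rfl (hs 1)).1
  · refine tendsto_atTop_mono' atTop ?_ (hlam.2.2.comp (tendsto_blockIndex hs))
    filter_upwards [eventually_ge_atTop 1] with m hm
    obtain ⟨n, j, hn, hj, rfl⟩ := exists_eq_blockStart_add hs hm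
    rw [Function.comp_apply, blockIndex_blockStart_add hs hn hj]
    exact (equidistantRefinement_blockStart_add_mem_Icc hlam hs hn hj).1

theorem setOf_equidistantRefinement (hs : ∀ n, 1 ≤ s n) :
    {y : ℝ | ∃ m : ℕ, 1 ≤ m ∧ equidistantRefinement lam s m = y} =
      {y : ℝ | ∃ n : ℕ, 1 ≤ n ∧ ∃ j : ℕ, j < s n ∧
        y = lam n + (j / s n : ℝ) * (lam (n + 1) - lam n)} := by
  ext y
  constructor
  · rintro ⟨m, hm, rfl⟩
    obtain ⟨n, j, hn, hj, rfl⟩ := exists_eq_blockStart_add hs hm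
    exact ⟨n, hn, j, hj, equidistantRefinement_blockStart_add hs hn hj⟩
  · rintro ⟨n, hn, j, hj, rfl⟩
    exact ⟨blockStart s n + j, (one_le_blockStart n).trans (Nat.le_add_right _ _),
      equidistantRefinement_blockStart_add hs hn hj⟩

theorem blockSum_equidistantRefinement (hs : ∀ n, 1 ≤ s n) (a : ℕ → ℂ) {n : ℕ} (hn : 1 ≤ n)
    (z : ℂ) :
    blockSum (equidistantRefinement lam s) a (blockStart s n) (s n) z =
      exp (-(lam n : ℂ) * z) * ∑ j ∈ range (s n),
        a (blockStart s n + j) * exp (-(((lam (n + 1) - lam n) / s n : ℝ) : ℂ) * z) ^ j := by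
  rw [blockSum, mul_sum]
  refine sum_congr rfl fun j hj => ?_
  rw [equidistantRefinement_blockStart_add hs hn (mem_range.1 hj), ← exp_nat_mul, mul_left_comm,
    ← exp_add]
  push_cast
  ring_nf

end Refinement

section Neder

variable {lam : ℕ → ℝ} {β : ℕ → ℝ} {r : ℕ → ℕ}

theorem norm_exp_neg_ofReal_mul_le_one {x : ℝ} (hx : 0 ≤ x) {z : ℂ} (hz : 0 ≤ z.re) :
    ‖exp (-(x : ℂ) * z)‖ ≤ 1 := by
  rw [norm_exp, Real.exp_le_one_iff, neg_mul, neg_re, re_ofReal_mul, neg_nonpos]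
  positivity

theorem sum_range_inv_sub (q : ℕ) :
    ∑ j ∈ range q, ((q : ℝ) - j)⁻¹ = ∑ i ∈ range q, 1 / ((i : ℝ) + 1) := by
  rw [← sum_range_reflect]
  refine sum_congr rfl fun i hi => ?_
  have h : ((q - 1 - i : ℕ) : ℝ) + (i + 1) = q := by rw [mem_range] at hi; norm_cast; omega
  rw [← h, add_sub_cancel_left, one_div]

variable (r) in
def nederSize (n : ℕ) : ℕ := 2 * r n + 1

theorem one_le_nederSize (n : ℕ) : 1 ≤ nederSize r n := Nat.le_add_left 1 _

-- The junk value `0⁻¹ = 0` makes the middle coefficient of each block vanish.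
variable (β r) in
noncomputable def nederCoeff : ℕ → ℂ :=
  blockwise (nederSize r) fun n j => ((β n * ((r n : ℝ) - j)⁻¹ : ℝ) : ℂ)

theorem blockSum_nederCoeff {n : ℕ} (hn : 1 ≤ n) (z : ℂ) :
    blockSum (equidistantRefinement lam (nederSize r)) (nederCoeff β r)
        (blockStart (nederSize r) n) (nederSize r n) z =
      β n * exp (-(lam n : ℂ) * z) *
        fejerPoly (r n) (exp (-(((lam (n + 1) - lam n) / nederSize r n : ℝ) : ℂ) * z)) := by
  rw [blockSum_equidistantRefinement one_le_nederSize _ hn, ← sum_range_inv_sub_mul_pow, mul_sum,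
    mul_sum]
  refine sum_congr rfl fun j hj => ?_
  rw [nederCoeff, blockwise_blockStart_add one_le_nederSize _ hn (mem_range.1 hj)]
  push_cast
  ring

theorem norm_blockSum_nederCoeff_le (hlam : IsFrequency lam) {n : ℕ} (hβ : 0 ≤ β n) (hn : 1 ≤ n)
    {z : ℂ} (hz : 0 ≤ z.re) :
    ‖blockSum (equidistantRefinement lam (nederSize r)) (nederCoeff β r)
        (blockStart (nederSize r) n) (nederSize r n) z‖ ≤ 2 * (π + 1) * β n := by
  have hd : 0 ≤ (lam (n + 1) - lam n) / nederSize r n :=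
    div_nonneg (sub_pos.2 (hlam.1 n hn)).le (Nat.cast_nonneg _)
  rw [blockSum_nederCoeff hn, norm_mul, norm_mul, norm_real, Real.norm_of_nonneg hβ]
  calc _ ≤ β n * 1 * (2 * (π + 1)) := by
        gcongr
        · exact norm_exp_neg_ofReal_mul_le_one (hlam.nonneg hn) hz
        · exact norm_fejerPoly_le _ (norm_exp_neg_ofReal_mul_le_one hd hz)
    _ = 2 * (π + 1) * β n := by ring

theorem uniformCauchySeqOn_partialSum_nederCoeff (hlam : IsFrequency lam) (hβ0 : ∀ n, 0 ≤ β n)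
    (hβ : Summable β) (r : ℕ → ℕ) :
    UniformCauchySeqOn
      (fun K z => partialSum (equidistantRefinement lam (nederSize r)) (nederCoeff β r)
        (blockStart (nederSize r) (K + 1) - 1) z) atTop {z | 0 < z.re} := by
  simp_rw [partialSum_blockStart_succ_sub_one]
  exact (tendstoUniformlyOn_tsum_nat (((summable_nat_add_iff 1).2 hβ).mul_left (2 * (π + 1)))
    (f := fun n => blockSum (equidistantRefinement lam (nederSize r)) (nederCoeff β r)
      (blockStart (nederSize r) (n + 1)) (nederSize r (n + 1)))
    fun n z hz => norm_blockSum_nederCoeff_le hlam (hβ0 _) (Nat.le_add_left 1 n)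
      (le_of_lt hz)).uniformCauchySeqOn

theorem one_le_norm_blockSum_nederCoeff (hlam : IsFrequency lam) {n : ℕ} (hn : 1 ≤ n)
    (hr : 1 ≤ β n * Real.exp (-lam (n + 1)) * ∑ i ∈ range (r n), 1 / ((i : ℝ) + 1)) :
    1 ≤ ‖blockSum (equidistantRefinement lam (nederSize r)) (nederCoeff β r)
        (blockStart (nederSize r) n) (r n) ((1 : ℝ) : ℂ)‖ := by
  set μ := equidistantRefinement lam (nederSize r)
  have hlt {j : ℕ} (hj : j ∈ range (r n)) : j < nederSize r n := by
    rw [mem_range] at hj; unfold nederSize; omega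
  have hterm : ∀ j ∈ range (r n), nederCoeff β r (blockStart (nederSize r) n + j) *
        exp (-(μ (blockStart (nederSize r) n + j) : ℂ) * ((1 : ℝ) : ℂ)) =
      ((β n * ((r n : ℝ) - j)⁻¹ * Real.exp (-μ (blockStart (nederSize r) n + j)) : ℝ) : ℂ) := by
    intro j hj
    rw [nederCoeff, blockwise_blockStart_add one_le_nederSize _ hn (hlt hj)]
    push_cast
    ring_nf
  have hβ : 0 ≤ β n := by
    by_contra! h
    have hH : 0 ≤ ∑ i ∈ range (r n), 1 / ((i : ℝ) + 1) := sum_nonneg fun i _ => by positivity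
    nlinarith [Real.exp_pos (-lam (n + 1)), mul_nonneg (Real.exp_pos (-lam (n + 1))).le hH]
  rw [blockSum, sum_congr rfl hterm, ← ofReal_sum, norm_real, Real.norm_eq_abs]
  refine le_trans ?_ (le_abs_self _)
  calc 1 ≤ β n * Real.exp (-lam (n + 1)) * ∑ i ∈ range (r n), 1 / ((i : ℝ) + 1) := hr
    _ = ∑ j ∈ range (r n), β n * ((r n : ℝ) - j)⁻¹ * Real.exp (-lam (n + 1)) := by
        rw [← sum_range_inv_sub, mul_sum]
        exact sum_congr rfl fun j _ => by ring
    _ ≤ _ := sum_le_sum fun j hj => by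
        have hsub : 0 ≤ ((r n : ℝ) - j)⁻¹ :=
          inv_nonneg.2 (sub_nonneg.2 (by exact_mod_cast (mem_range.1 hj).le))
        gcongr
        exact (equidistantRefinement_blockStart_add_mem_Icc hlam one_le_nederSize hn (hlt hj)).2

theorem not_tendsto_partialSum_nederCoeff (hlam : IsFrequency lam)
    (hr : ∀ n, 1 ≤ β n * Real.exp (-lam (n + 1)) * ∑ i ∈ range (r n), 1 / ((i : ℝ) + 1)) :
    ¬ ∃ L : ℂ, Tendsto (fun N => partialSum (equidistantRefinement lam (nederSize r))
      (nederCoeff β r) N ((1 : ℝ) : ℂ)) atTop (𝓝 L) := by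
  rintro ⟨L, hL⟩
  obtain ⟨N, hN⟩ := Metric.cauchySeq_iff.1 hL.cauchySeq 1 one_pos
  have hB := le_blockStart (one_le_nederSize (r := r)) (N + 1)
  have hB1 := one_le_blockStart (s := nederSize r) (N + 1)
  have hdist := hN (blockStart (nederSize r) (N + 1) - 1 + r (N + 1)) (by omega)
    (blockStart (nederSize r) (N + 1) - 1) (by omega)
  rw [dist_eq_norm, partialSum_add, add_sub_cancel_left, Nat.sub_add_cancel hB1] at hdist
  exact hdist.not_ge (one_le_norm_blockSum_nederCoeff hlam (Nat.le_add_left 1 N) (hr _))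

end Neder

/-- For every frequency `λ` there is an equidistant refinement `η` (as in Neder's
construction) for which `D∞(η)` is not complete: some sequence of η-Dirichlet
polynomials is uniformly Cauchy on the right half-plane while the corresponding
series diverges at some `x > 0`. -/
theorem exists_refinement_not_complete (lam : ℕ → ℝ) (hfreq : IsFrequency lam) :
    ∃ (sn : ℕ → ℕ) (a : ℕ → ℂ) (Nk : ℕ → ℕ) (x : ℝ) (eta : ℕ → ℝ),
      (∀ n : ℕ, 1 ≤ sn n) ∧
      StrictMono Nk ∧
      0 < x ∧
      IsFrequency eta ∧
      ({y : ℝ | ∃ m : ℕ, 1 ≤ m ∧ eta m = y} =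
        {y : ℝ | ∃ n : ℕ, 1 ≤ n ∧ ∃ j : ℕ, j < sn n ∧
          y = lam n + (j / sn n : ℝ) * (lam (n + 1) - lam n)}) ∧
      (∀ δ : ℝ, 0 < δ → ∃ K₀ : ℕ, ∀ K : ℕ, K₀ ≤ K → ∀ L : ℕ, K₀ ≤ L → ∀ s : ℂ,
        0 < s.re →
          ‖partialSum eta a (Nk K) s - partialSum eta a (Nk L) s‖ ≤ δ) ∧
      ¬ (∃ L : ℂ, Tendsto (fun N => partialSum eta a N (x : ℂ)) atTop (nhds L)) := by
  obtain ⟨r, hr⟩ : ∃ r : ℕ → ℕ, ∀ n,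
      1 ≤ (1 / 2 : ℝ) ^ n * Real.exp (-lam (n + 1)) * ∑ i ∈ range (r n), 1 / ((i : ℝ) + 1) := by
    choose r hr using fun n : ℕ =>
      (Real.tendsto_sum_range_one_div_nat_succ_atTop.eventually_ge_atTop
        (2 ^ n * Real.exp (lam (n + 1)))).exists
    refine ⟨r, fun n => ?_⟩
    calc (1 : ℝ) = (1 / 2) ^ n * Real.exp (-lam (n + 1)) * (2 ^ n * Real.exp (lam (n + 1))) := by
          rw [Real.exp_neg, div_pow, one_pow]; field_simp
      _ ≤ _ := by gcongr; exact hr n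
  have hcauchy := Metric.uniformCauchySeqOn_iff.1 <| uniformCauchySeqOn_partialSum_nederCoeff
    hfreq (fun n => by positivity) summable_geometric_two r
  refine ⟨nederSize r, nederCoeff (fun n => (1 / 2 : ℝ) ^ n) r,
    fun K => blockStart (nederSize r) (K + 1) - 1, 1, equidistantRefinement lam (nederSize r),
    one_le_nederSize, strictMono_blockStart_succ_sub_one one_le_nederSize, one_pos,
    hfreq.equidistantRefinement one_le_nederSize, setOf_equidistantRefinement one_le_nederSize,
    fun δ hδ => ?_, not_tendsto_partialSum_nederCoeff hfreq hr⟩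
  obtain ⟨K₀, hK₀⟩ := hcauchy δ hδ
  exact ⟨K₀, fun K hK L hL z hz => by simpa only [dist_eq_norm] using (hK₀ K hK L hL z hz).le⟩
end
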